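/- Let Ω ⊆ ℂ be open, U: Ω → ℂ smooth, and h: Ω → ℂ holomorphic (∂̄h = 0). Suppose ψ = (ψ₁, ψ₂) satisfies ∂̄ψ₁ = conj(U)ψ₂, ∂ψ₂ = −Uψ₁, and φ = (φ₁, φ₂) satisfies ∂̄φ₁ = Uφ₂, ∂φ₂ = −conj(U)φ₁. Set ψ̃ = (e^h ψ₁, e^{conj(h)} ψ₂), φ̃ = (e^{−h} φ₁, e^{−conj(h)} φ₂) and Ũ = e^{conj(h) − h} U. Then ψ̃ satisfies ∂̄ψ̃₁ = conj(Ũ)ψ̃₂, ∂ψ̃₂ = −Ũψ̃₁, and φ̃ satisfies ∂̄φ̃₁ = Ũφ̃₂, ∂φ̃₂ = −conj(Ũ)φ̃₁; moreover the four Weierstrass differentials are unchanged: each of the expressions (i/2)(conj(φ₂)conj(ψ₂) + φ₁ψ₁), (1/2)(conj(φ₂)conj(ψ₂) − φ₁ψ₁), (1/2)(conj(φ₂)ψ₁ + φ₁conj(ψ₂)), (i/2)(conj(φ₂)ψ₁ − φ₁conj(ψ₂)) takes the same value when computed from (ψ̃, φ̃) as from (ψ, φ). -/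

import Mathlib

open ComplexConjugate

/-- The Wirtinger derivative `∂g = (∂g/∂x − i ∂g/∂y)/2` of `g : ℂ → ℂ`. -/
noncomputable def wdz (g : ℂ → ℂ) (z : ℂ) : ℂ :=
  (fderiv ℝ g z 1 - Complex.I * fderiv ℝ g z Complex.I) / 2

/-- The Wirtinger derivative `∂̄g = (∂g/∂x + i ∂g/∂y)/2` of `g : ℂ → ℂ`. -/
noncomputable def wdzbar (g : ℂ → ℂ) (z : ℂ) : ℂ :=
  (fderiv ℝ g z 1 + Complex.I * fderiv ℝ g z Complex.I) / 2

lemma fderiv_mul_apply' {f g : ℂ → ℂ} {z : ℂ} (hf : DifferentiableAt ℝ f z)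
    (hg : DifferentiableAt ℝ g z) (v : ℂ) :
    fderiv ℝ (fun w => f w * g w) z v = fderiv ℝ f z v * g z + f z * fderiv ℝ g z v := by
  rw [fderiv_fun_mul hf hg]
  simp [mul_comm]
  ring

lemma fderiv_cexp_apply {f : ℂ → ℂ} {z : ℂ} (hf : DifferentiableAt ℝ f z) (v : ℂ) :
    fderiv ℝ (fun w => Complex.exp (f w)) z v = Complex.exp (f z) * fderiv ℝ f z v := by
  have h1 : HasFDerivAt Complex.exp
      (ContinuousLinearMap.restrictScalars ℝ
        ((1 : ℂ →L[ℂ] ℂ).smulRight (Complex.exp (f z)))) (f z) :=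
    (Complex.hasDerivAt_exp (f z)).hasFDerivAt.restrictScalars ℝ
  have h2 : HasFDerivAt (fun w => Complex.exp (f w))
      ((ContinuousLinearMap.restrictScalars ℝ
        ((1 : ℂ →L[ℂ] ℂ).smulRight (Complex.exp (f z)))).comp (fderiv ℝ f z)) z :=
    h1.comp z hf.hasFDerivAt
  rw [h2.fderiv]
  simp [mul_comm]

lemma fderiv_conj_apply {f : ℂ → ℂ} {z : ℂ} (hf : DifferentiableAt ℝ f z) (v : ℂ) :
    fderiv ℝ (fun w => conj (f w)) z v = conj (fderiv ℝ f z v) := by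
  have h2 : HasFDerivAt (fun w => conj (f w))
      ((Complex.conjCLE.toContinuousLinearMap).comp (fderiv ℝ f z)) z :=
    (Complex.conjCLE.toContinuousLinearMap.hasFDerivAt (x := f z)).comp z hf.hasFDerivAt
  rw [h2.fderiv]
  simp

lemma diff_cexp_comp {f : ℂ → ℂ} {z : ℂ} (hf : DifferentiableAt ℝ f z) :
    DifferentiableAt ℝ (fun w => Complex.exp (f w)) z := by
  have h1 : DifferentiableAt ℝ Complex.exp (f z) :=
    ((Complex.hasDerivAt_exp (f z)).hasFDerivAt.restrictScalars ℝ).differentiableAt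
  exact h1.comp z hf

lemma diff_conj_comp {f : ℂ → ℂ} {z : ℂ} (hf : DifferentiableAt ℝ f z) :
    DifferentiableAt ℝ (fun w => conj (f w)) z :=
  (Complex.conjCLE.differentiable.differentiableAt (x := f z)).comp z hf

lemma wdz_mul {f g : ℂ → ℂ} {z : ℂ} (hf : DifferentiableAt ℝ f z)
    (hg : DifferentiableAt ℝ g z) :
    wdz (fun w => f w * g w) z = wdz f z * g z + f z * wdz g z := by
  simp only [wdz, fderiv_mul_apply' hf hg]; ring

lemma wdzbar_mul {f g : ℂ → ℂ} {z : ℂ} (hf : DifferentiableAt ℝ f z)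
    (hg : DifferentiableAt ℝ g z) :
    wdzbar (fun w => f w * g w) z = wdzbar f z * g z + f z * wdzbar g z := by
  simp only [wdzbar, fderiv_mul_apply' hf hg]; ring

lemma wdz_cexp {f : ℂ → ℂ} {z : ℂ} (hf : DifferentiableAt ℝ f z) :
    wdz (fun w => Complex.exp (f w)) z = Complex.exp (f z) * wdz f z := by
  simp only [wdz, fderiv_cexp_apply hf]; ring

lemma wdzbar_cexp {f : ℂ → ℂ} {z : ℂ} (hf : DifferentiableAt ℝ f z) :
    wdzbar (fun w => Complex.exp (f w)) z = Complex.exp (f z) * wdzbar f z := by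
  simp only [wdzbar, fderiv_cexp_apply hf]; ring

lemma wdz_conj {f : ℂ → ℂ} {z : ℂ} (hf : DifferentiableAt ℝ f z) :
    wdz (fun w => conj (f w)) z = conj (wdzbar f z) := by
  simp only [wdz, wdzbar, fderiv_conj_apply hf, map_div₀, map_add, map_mul, Complex.conj_I,
    map_ofNat]
  ring

lemma wdzbar_conj {f : ℂ → ℂ} {z : ℂ} (hf : DifferentiableAt ℝ f z) :
    wdzbar (fun w => conj (f w)) z = conj (wdz f z) := by
  simp only [wdz, wdzbar, fderiv_conj_apply hf, map_div₀, map_sub, map_mul, Complex.conj_I,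
    map_ofNat]
  ring

lemma wdz_neg {f : ℂ → ℂ} {z : ℂ} :
    wdz (fun w => -f w) z = -wdz f z := by
  simp only [wdz, fderiv_neg]; simp; ring

lemma wdzbar_neg {f : ℂ → ℂ} {z : ℂ} :
    wdzbar (fun w => -f w) z = -wdzbar f z := by
  simp only [wdzbar, fderiv_neg]; simp; ring

/-- gauge transformations of the Weierstrass representation of surfaces in `ℝ⁴`:
if `h` is holomorphic, `ψ` solves `Dψ = 0` and `φ` solves `D^∨φ = 0` with potential `U`,
then `ψt = (e^h ψ₁, e^{conj h} ψ₂)`, `φt = (e^{−h} φ₁, e^{−conj h} φ₂)` solve the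
corresponding equations with potential `Ut = e^{conj h − h} U`, and the four Weierstrass
differentials are unchanged. -/
theorem stmt6 (Ω : Set ℂ) (hΩ : IsOpen Ω)
    (U h : ℂ → ℂ) (hUsm : ContDiffOn ℝ (⊤ : ℕ∞) U Ω) (hhsm : ContDiffOn ℝ (⊤ : ℕ∞) h Ω)
    (hhol : ∀ z ∈ Ω, wdzbar h z = 0)
    (ψ₁ ψ₂ φ₁ φ₂ : ℂ → ℂ)
    (hψ₁ : ContDiffOn ℝ (⊤ : ℕ∞) ψ₁ Ω) (hψ₂ : ContDiffOn ℝ (⊤ : ℕ∞) ψ₂ Ω)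
    (hφ₁ : ContDiffOn ℝ (⊤ : ℕ∞) φ₁ Ω) (hφ₂ : ContDiffOn ℝ (⊤ : ℕ∞) φ₂ Ω)
    (hψa : ∀ z ∈ Ω, wdzbar ψ₁ z = conj (U z) * ψ₂ z)
    (hψb : ∀ z ∈ Ω, wdz ψ₂ z = -U z * ψ₁ z)
    (hφa : ∀ z ∈ Ω, wdzbar φ₁ z = U z * φ₂ z)
    (hφb : ∀ z ∈ Ω, wdz φ₂ z = -conj (U z) * φ₁ z)
    (Ut ψt₁ ψt₂ φt₁ φt₂ : ℂ → ℂ)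
    (hUt : Ut = fun z => Complex.exp (conj (h z) - h z) * U z)
    (hψt₁ : ψt₁ = fun z => Complex.exp (h z) * ψ₁ z)
    (hψt₂ : ψt₂ = fun z => Complex.exp (conj (h z)) * ψ₂ z)
    (hφt₁ : φt₁ = fun z => Complex.exp (-h z) * φ₁ z)
    (hφt₂ : φt₂ = fun z => Complex.exp (-conj (h z)) * φ₂ z) :
    (∀ z ∈ Ω, wdzbar ψt₁ z = conj (Ut z) * ψt₂ z) ∧
    (∀ z ∈ Ω, wdz ψt₂ z = -Ut z * ψt₁ z) ∧
    (∀ z ∈ Ω, wdzbar φt₁ z = Ut z * φt₂ z) ∧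
    (∀ z ∈ Ω, wdz φt₂ z = -conj (Ut z) * φt₁ z) ∧
    (∀ z ∈ Ω,
      Complex.I / 2 * (conj (φt₂ z) * conj (ψt₂ z) + φt₁ z * ψt₁ z)
        = Complex.I / 2 * (conj (φ₂ z) * conj (ψ₂ z) + φ₁ z * ψ₁ z) ∧
      (1 : ℂ) / 2 * (conj (φt₂ z) * conj (ψt₂ z) - φt₁ z * ψt₁ z)
        = (1 : ℂ) / 2 * (conj (φ₂ z) * conj (ψ₂ z) - φ₁ z * ψ₁ z) ∧
      (1 : ℂ) / 2 * (conj (φt₂ z) * ψt₁ z + φt₁ z * conj (ψt₂ z))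
        = (1 : ℂ) / 2 * (conj (φ₂ z) * ψ₁ z + φ₁ z * conj (ψ₂ z)) ∧
      Complex.I / 2 * (conj (φt₂ z) * ψt₁ z - φt₁ z * conj (ψt₂ z))
        = Complex.I / 2 * (conj (φ₂ z) * ψ₁ z - φ₁ z * conj (ψ₂ z))) := by
  subst hUt hψt₁ hψt₂ hφt₁ hφt₂
  have hd : ∀ {f : ℂ → ℂ}, ContDiffOn ℝ (⊤ : ℕ∞) f Ω → ∀ z ∈ Ω, DifferentiableAt ℝ f z := by
    intro f hf z hz
    exact (hf.differentiableOn (by simp)).differentiableAt (hΩ.mem_nhds hz)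
  refine ⟨?_, ?_, ?_, ?_, ?_⟩
  · intro z hz
    rw [wdzbar_mul (diff_cexp_comp (hd hhsm z hz)) (hd hψ₁ z hz),
      wdzbar_cexp (hd hhsm z hz), hhol z hz, hψa z hz]
    simp only [map_mul, ← Complex.exp_conj, map_sub, Complex.conj_conj, Complex.exp_sub, map_div₀]
    field_simp [Complex.exp_ne_zero]
    ring
  · intro z hz
    rw [wdz_mul (diff_cexp_comp (diff_conj_comp (hd hhsm z hz))) (hd hψ₂ z hz),
      wdz_cexp (diff_conj_comp (hd hhsm z hz)), wdz_conj (hd hhsm z hz), hhol z hz, hψb z hz]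
    simp only [map_mul, ← Complex.exp_conj, map_sub, Complex.conj_conj, Complex.exp_sub, map_zero]
    field_simp [Complex.exp_ne_zero]
    ring
  · intro z hz
    rw [wdzbar_mul (diff_cexp_comp (hd hhsm z hz).fun_neg) (hd hφ₁ z hz),
      wdzbar_cexp (hd hhsm z hz).fun_neg, wdzbar_neg, hhol z hz, hφa z hz]
    simp only [map_mul, ← Complex.exp_conj, map_sub, Complex.conj_conj, Complex.exp_sub,
      Complex.exp_neg, neg_zero, map_div₀, map_inv₀]
    field_simp [Complex.exp_ne_zero]
    ring
  · intro z hz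
    rw [wdz_mul (diff_cexp_comp (diff_conj_comp (hd hhsm z hz)).fun_neg) (hd hφ₂ z hz),
      wdz_cexp (diff_conj_comp (hd hhsm z hz)).fun_neg, wdz_neg, wdz_conj (hd hhsm z hz),
      hhol z hz, hφb z hz]
    simp only [map_mul, ← Complex.exp_conj, map_sub, map_neg, Complex.conj_conj,
      Complex.exp_sub, Complex.exp_neg, map_zero, neg_zero, map_div₀, map_inv₀]
    field_simp [Complex.exp_ne_zero]
    ring
  · intro z hz
    refine ⟨?_, ?_, ?_, ?_⟩ <;>
    · simp only [map_mul, ← Complex.exp_conj, map_neg, Complex.conj_conj, Complex.exp_neg, map_inv₀]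
      field_simp [Complex.exp_ne_zero]
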